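/- Let 𝒢 = {A ∈ M₄(ℝ) : T·Aᵗ·T = -A} with T = e₁₁+e₂₂+e₃₄+e₄₃, and for fixed reals k, l define 𝒢₀ = span{(e₁₂-e₂₁) + k(e₃₃-e₄₄)}, M = span{l(e₁₂-e₂₁) + (e₃₃-e₄₄), e₁₄-e₃₁, e₂₄-e₃₂}, N = span{e₁₃-e₄₁, e₂₃-e₄₂}. If kl ≠ 1 then 𝒢 = 𝒢₀ ⊕ M ⊕ N as vector spaces, 𝒢₀ is a subalgebra, [𝒢₀, M] ⊆ M, [𝒢₀, N] ⊆ N, and 𝒢₀ + M and 𝒢₀ + N are Lie subalgebras of 𝒢. -/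

import Mathlib

open Matrix

section

attribute [local instance 100] LieRing.ofAssociativeRing

private lemma aux_bracket_span (S : Submodule ℝ (Matrix (Fin 4) (Fin 4) ℝ))
    (s t : Set (Matrix (Fin 4) (Fin 4) ℝ))
    (h : ∀ a ∈ s, ∀ b ∈ t, ⁅a, b⁆ ∈ S) :
    ∀ x ∈ Submodule.span ℝ s, ∀ y ∈ Submodule.span ℝ t, ⁅x, y⁆ ∈ S := by
  intro x hx
  induction hx using Submodule.span_induction with
  | mem a ha =>
    intro y hy
    induction hy using Submodule.span_induction with
    | mem b hb => exact h a ha b hb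
    | zero => rw [lie_zero]; exact S.zero_mem
    | add b c _ _ ihb ihc => rw [lie_add]; exact S.add_mem ihb ihc
    | smul r b _ ihb => rw [lie_smul]; exact S.smul_mem r ihb
  | zero => intro y hy; rw [zero_lie]; exact S.zero_mem
  | add a b _ _ iha ihb => intro y hy; rw [add_lie]; exact S.add_mem (iha y hy) (ihb y hy)
  | smul r a _ iha => intro y hy; rw [smul_lie]; exact S.smul_mem r (iha y hy)

end

private lemma aux_transpose_eta (A : Matrix (Fin 4) (Fin 4) ℝ) :
    Aᵀ = !![A 0 0, A 1 0, A 2 0, A 3 0;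
            A 0 1, A 1 1, A 2 1, A 3 1;
            A 0 2, A 1 2, A 2 2, A 3 2;
            A 0 3, A 1 3, A 2 3, A 3 3] := by
  ext i j
  fin_cases i <;> fin_cases j <;> rfl

set_option maxHeartbeats 1000000 in
private lemma aux_mul_fin_four
    (a₁₁ a₁₂ a₁₃ a₁₄ a₂₁ a₂₂ a₂₃ a₂₄ a₃₁ a₃₂ a₃₃ a₃₄ a₄₁ a₄₂ a₄₃ a₄₄
     b₁₁ b₁₂ b₁₃ b₁₄ b₂₁ b₂₂ b₂₃ b₂₄ b₃₁ b₃₂ b₃₃ b₃₄ b₄₁ b₄₂ b₄₃ b₄₄ : ℝ) :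
    !![a₁₁, a₁₂, a₁₃, a₁₄; a₂₁, a₂₂, a₂₃, a₂₄; a₃₁, a₃₂, a₃₃, a₃₄; a₄₁, a₄₂, a₄₃, a₄₄] *
    !![b₁₁, b₁₂, b₁₃, b₁₄; b₂₁, b₂₂, b₂₃, b₂₄; b₃₁, b₃₂, b₃₃, b₃₄; b₄₁, b₄₂, b₄₃, b₄₄] =
    !![a₁₁*b₁₁ + a₁₂*b₂₁ + a₁₃*b₃₁ + a₁₄*b₄₁, a₁₁*b₁₂ + a₁₂*b₂₂ + a₁₃*b₃₂ + a₁₄*b₄₂,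
       a₁₁*b₁₃ + a₁₂*b₂₃ + a₁₃*b₃₃ + a₁₄*b₄₃, a₁₁*b₁₄ + a₁₂*b₂₄ + a₁₃*b₃₄ + a₁₄*b₄₄;
       a₂₁*b₁₁ + a₂₂*b₂₁ + a₂₃*b₃₁ + a₂₄*b₄₁, a₂₁*b₁₂ + a₂₂*b₂₂ + a₂₃*b₃₂ + a₂₄*b₄₂,
       a₂₁*b₁₃ + a₂₂*b₂₃ + a₂₃*b₃₃ + a₂₄*b₄₃, a₂₁*b₁₄ + a₂₂*b₂₄ + a₂₃*b₃₄ + a₂₄*b₄₄;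
       a₃₁*b₁₁ + a₃₂*b₂₁ + a₃₃*b₃₁ + a₃₄*b₄₁, a₃₁*b₁₂ + a₃₂*b₂₂ + a₃₃*b₃₂ + a₃₄*b₄₂,
       a₃₁*b₁₃ + a₃₂*b₂₃ + a₃₃*b₃₃ + a₃₄*b₄₃, a₃₁*b₁₄ + a₃₂*b₂₄ + a₃₃*b₃₄ + a₃₄*b₄₄;
       a₄₁*b₁₁ + a₄₂*b₂₁ + a₄₃*b₃₁ + a₄₄*b₄₁, a₄₁*b₁₂ + a₄₂*b₂₂ + a₄₃*b₃₂ + a₄₄*b₄₂,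
       a₄₁*b₁₃ + a₄₂*b₂₃ + a₄₃*b₃₃ + a₄₄*b₄₃, a₄₁*b₁₄ + a₄₂*b₂₄ + a₄₃*b₃₄ + a₄₄*b₄₄] := by
  ext i j
  fin_cases i <;> fin_cases j <;>
    simp [Matrix.mul_apply, Fin.sum_univ_four, Matrix.vecHead, Matrix.vecTail]

set_option maxHeartbeats 4000000 in
/-- The non-graded decomposition 𝒢 = 𝒢₀ ⊕ M ⊕ N of 𝒢 = {A : T·Aᵗ·T = -A}
with parameters k, l, kl ≠ 1. -/
theorem stmt_17 (k l : ℝ) (hkl : k * l ≠ 1)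
    (T : Matrix (Fin 4) (Fin 4) ℝ)
    (hT : T = single 0 0 1 + single 1 1 1 +
      single 2 3 1 + single 3 2 1)
    (G0 M N : Submodule ℝ (Matrix (Fin 4) (Fin 4) ℝ))
    (hG0 : G0 = Submodule.span ℝ
      {(single 0 1 1 - single 1 0 1) +
        k • (single 2 2 1 - single 3 3 1)})
    (hM : M = Submodule.span ℝ
      {l • (single 0 1 1 - single 1 0 1) +
        (single 2 2 1 - single 3 3 1),
       single 0 3 1 - single 2 0 1,
       single 1 3 1 - single 2 1 1})
    (hN : N = Submodule.span ℝ
      {single 0 2 1 - single 3 0 1,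
       single 1 2 1 - single 3 1 1}) :
    -- 𝒢 = 𝒢₀ ⊕ M ⊕ N as vector spaces:
    (∀ A, T * Aᵀ * T = -A ↔ ∃ a ∈ G0, ∃ b ∈ M, ∃ c ∈ N, A = a + b + c) ∧
    (∀ a ∈ G0, ∀ b ∈ M, ∀ c ∈ N, a + b + c = 0 → a = 0 ∧ b = 0 ∧ c = 0) ∧
    -- 𝒢₀ is a subalgebra and M, N are 𝒢₀-modules:
    (∀ x ∈ G0, ∀ y ∈ G0, ⁅x, y⁆ ∈ G0) ∧
    (∀ x ∈ G0, ∀ y ∈ M, ⁅x, y⁆ ∈ M) ∧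
    (∀ x ∈ G0, ∀ y ∈ N, ⁅x, y⁆ ∈ N) ∧
    -- 𝒢₀ + M and 𝒢₀ + N are subalgebras:
    (∀ x ∈ G0 ⊔ M, ∀ y ∈ G0 ⊔ M, ⁅x, y⁆ ∈ G0 ⊔ M) ∧
    (∀ x ∈ G0 ⊔ N, ∀ y ∈ G0 ⊔ N, ⁅x, y⁆ ∈ G0 ⊔ N) := by
  letI : LieRing (Matrix (Fin 4) (Fin 4) ℝ) := LieRing.ofAssociativeRing
  have hD : (1 : ℝ) - k * l ≠ 0 := sub_ne_zero.mpr (Ne.symm hkl)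
  obtain ⟨x0c, hx0c⟩ : ∃ X : Matrix (Fin 4) (Fin 4) ℝ, X = !![0,1,0,0; -1,0,0,0; 0,0,k,0; 0,0,0,-k] := ⟨_, rfl⟩
  obtain ⟨m0c, hm0c⟩ : ∃ X : Matrix (Fin 4) (Fin 4) ℝ, X = !![0,l,0,0; -l,0,0,0; 0,0,1,0; 0,0,0,-1] := ⟨_, rfl⟩
  obtain ⟨m1c, hm1c⟩ : ∃ X : Matrix (Fin 4) (Fin 4) ℝ, X = !![0,0,0,1; 0,0,0,0; -1,0,0,0; 0,0,0,0] := ⟨_, rfl⟩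
  obtain ⟨m2c, hm2c⟩ : ∃ X : Matrix (Fin 4) (Fin 4) ℝ, X = !![0,0,0,0; 0,0,0,1; 0,-1,0,0; 0,0,0,0] := ⟨_, rfl⟩
  obtain ⟨n1c, hn1c⟩ : ∃ X : Matrix (Fin 4) (Fin 4) ℝ, X = !![0,0,1,0; 0,0,0,0; 0,0,0,0; -1,0,0,0] := ⟨_, rfl⟩
  obtain ⟨n2c, hn2c⟩ : ∃ X : Matrix (Fin 4) (Fin 4) ℝ, X = !![0,0,0,0; 0,0,1,0; 0,0,0,0; 0,-1,0,0] := ⟨_, rfl⟩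
  obtain ⟨Tc, hTc⟩ : ∃ X : Matrix (Fin 4) (Fin 4) ℝ, X = !![1,0,0,0; 0,1,0,0; 0,0,0,1; 0,0,1,0] := ⟨_, rfl⟩
  have ex0 : (single 0 1 1 - single 1 0 1) + k • ((single 2 2 1 : Matrix (Fin 4) (Fin 4) ℝ) - single 3 3 1) = x0c := by
    rw [hx0c]; ext i j; fin_cases i <;> fin_cases j <;> simp [Matrix.single, Matrix.vecHead, Matrix.vecTail]
  have em0 : l • ((single 0 1 1 : Matrix (Fin 4) (Fin 4) ℝ) - single 1 0 1) + (single 2 2 1 - single 3 3 1) = m0c := by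
    rw [hm0c]; ext i j; fin_cases i <;> fin_cases j <;> simp [Matrix.single, Matrix.vecHead, Matrix.vecTail]
  have em1 : (single 0 3 1 : Matrix (Fin 4) (Fin 4) ℝ) - single 2 0 1 = m1c := by
    rw [hm1c]; ext i j; fin_cases i <;> fin_cases j <;> simp [Matrix.single, Matrix.vecHead, Matrix.vecTail]
  have em2 : (single 1 3 1 : Matrix (Fin 4) (Fin 4) ℝ) - single 2 1 1 = m2c := by
    rw [hm2c]; ext i j; fin_cases i <;> fin_cases j <;> simp [Matrix.single, Matrix.vecHead, Matrix.vecTail]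
  have en1 : (single 0 2 1 : Matrix (Fin 4) (Fin 4) ℝ) - single 3 0 1 = n1c := by
    rw [hn1c]; ext i j; fin_cases i <;> fin_cases j <;> simp [Matrix.single, Matrix.vecHead, Matrix.vecTail]
  have en2 : (single 1 2 1 : Matrix (Fin 4) (Fin 4) ℝ) - single 3 1 1 = n2c := by
    rw [hn2c]; ext i j; fin_cases i <;> fin_cases j <;> simp [Matrix.single, Matrix.vecHead, Matrix.vecTail]
  have eT : T = Tc := by
    rw [hT, hTc]; ext i j; fin_cases i <;> fin_cases j <;> simp [Matrix.single, Matrix.vecHead, Matrix.vecTail]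
  rw [ex0] at hG0
  rw [em0, em1, em2] at hM
  rw [en1, en2] at hN
  clear ex0 em0 em1 em2 en1 en2 hT
  -- membership characterizations
  have hG0mem : ∀ x, x ∈ G0 ↔ ∃ r : ℝ, x = r • x0c := by
    intro x
    rw [hG0, Submodule.mem_span_singleton]
    exact ⟨fun ⟨r, h⟩ => ⟨r, h.symm⟩, fun ⟨r, h⟩ => ⟨r, h.symm⟩⟩
  have hMmem : ∀ x, x ∈ M ↔ ∃ r s t : ℝ, x = r • m0c + s • m1c + t • m2c := by
    intro x
    rw [hM]
    constructor
    · intro hx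
      rw [show ({m0c, m1c, m2c} : Set (Matrix (Fin 4) (Fin 4) ℝ)) =
          insert m0c (insert m1c {m2c}) from rfl, Submodule.mem_span_insert] at hx
      obtain ⟨r, z, hz, rfl⟩ := hx
      rw [Submodule.mem_span_insert] at hz
      obtain ⟨s, w, hw, rfl⟩ := hz
      rw [Submodule.mem_span_singleton] at hw
      obtain ⟨t, rfl⟩ := hw
      exact ⟨r, s, t, (add_assoc _ _ _).symm⟩
    · rintro ⟨r, s, t, rfl⟩
      exact add_mem (add_mem (Submodule.smul_mem _ _ (Submodule.subset_span (by simp)))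
        (Submodule.smul_mem _ _ (Submodule.subset_span (by simp))))
        (Submodule.smul_mem _ _ (Submodule.subset_span (by simp)))
  have hNmem : ∀ x, x ∈ N ↔ ∃ p q : ℝ, x = p • n1c + q • n2c := by
    intro x
    rw [hN, Submodule.mem_span_pair]
    exact ⟨fun ⟨p, q, h⟩ => ⟨p, q, h.symm⟩, fun ⟨p, q, h⟩ => ⟨p, q, h.symm⟩⟩
  have hb0 : ⁅x0c, m0c⁆ = 0 := by
    rw [Ring.lie_def]; rw [hx0c, hm0c]; rw [aux_mul_fin_four, aux_mul_fin_four]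
    ext i j; fin_cases i <;> fin_cases j <;> simp [Matrix.vecHead, Matrix.vecTail] <;> ring
  have hb1 : ⁅x0c, m1c⁆ = (0:ℝ) • m0c + k • m1c + (-1:ℝ) • m2c := by
    rw [Ring.lie_def]; rw [hx0c, hm0c, hm1c, hm2c]; rw [aux_mul_fin_four, aux_mul_fin_four]
    ext i j; fin_cases i <;> fin_cases j <;> simp [Matrix.vecHead, Matrix.vecTail] <;> ring
  have hb2 : ⁅x0c, m2c⁆ = (0:ℝ) • m0c + (1:ℝ) • m1c + k • m2c := by
    rw [Ring.lie_def]; rw [hx0c, hm0c, hm1c, hm2c]; rw [aux_mul_fin_four, aux_mul_fin_four]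
    ext i j; fin_cases i <;> fin_cases j <;> simp [Matrix.vecHead, Matrix.vecTail] <;> ring
  have hb3 : ⁅m0c, m1c⁆ = (0:ℝ) • m0c + (1:ℝ) • m1c + (-l) • m2c := by
    rw [Ring.lie_def]; rw [hm0c, hm1c, hm2c]; rw [aux_mul_fin_four, aux_mul_fin_four]
    ext i j; fin_cases i <;> fin_cases j <;> simp [Matrix.vecHead, Matrix.vecTail] <;> ring
  have hb4 : ⁅m0c, m2c⁆ = (0:ℝ) • m0c + l • m1c + (1:ℝ) • m2c := by
    rw [Ring.lie_def]; rw [hm0c, hm1c, hm2c]; rw [aux_mul_fin_four, aux_mul_fin_four]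
    ext i j; fin_cases i <;> fin_cases j <;> simp [Matrix.vecHead, Matrix.vecTail] <;> ring
  have hb5 : ⁅m1c, m2c⁆ = 0 := by
    rw [Ring.lie_def]; rw [hm1c, hm2c]; rw [aux_mul_fin_four, aux_mul_fin_four]
    ext i j; fin_cases i <;> fin_cases j <;> simp [Matrix.vecHead, Matrix.vecTail] <;> ring
  have hc1 : ⁅x0c, n1c⁆ = (-k) • n1c + (-1:ℝ) • n2c := by
    rw [Ring.lie_def]; rw [hx0c, hn1c, hn2c]; rw [aux_mul_fin_four, aux_mul_fin_four]
    ext i j; fin_cases i <;> fin_cases j <;> simp [Matrix.vecHead, Matrix.vecTail] <;> ring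
  have hc2 : ⁅x0c, n2c⁆ = (1:ℝ) • n1c + (-k) • n2c := by
    rw [Ring.lie_def]; rw [hx0c, hn1c, hn2c]; rw [aux_mul_fin_four, aux_mul_fin_four]
    ext i j; fin_cases i <;> fin_cases j <;> simp [Matrix.vecHead, Matrix.vecTail] <;> ring
  have hc3 : ⁅n1c, n2c⁆ = 0 := by
    rw [Ring.lie_def]; rw [hn1c, hn2c]; rw [aux_mul_fin_four, aux_mul_fin_four]
    ext i j; fin_cases i <;> fin_cases j <;> simp [Matrix.vecHead, Matrix.vecTail] <;> ring
  refine ⟨?_, ?_, ?_, ?_, ?_, ?_, ?_⟩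
  · -- part 1
    intro A
    constructor
    · intro hA
      rw [eT, hTc, aux_transpose_eta A, aux_mul_fin_four, aux_mul_fin_four] at hA
      have h00 : A 0 0 = 0 := by
        have := congrFun (congrFun hA 0) 0
        simp [Matrix.vecHead, Matrix.vecTail] at this
        linarith
      have h11 : A 1 1 = 0 := by
        have := congrFun (congrFun hA 1) 1
        simp [Matrix.vecHead, Matrix.vecTail] at this
        linarith
      have h23 : A 2 3 = 0 := by
        have := congrFun (congrFun hA 2) 3
        simp [Matrix.vecHead, Matrix.vecTail] at this
        linarith
      have h32 : A 3 2 = 0 := by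
        have := congrFun (congrFun hA 3) 2
        simp [Matrix.vecHead, Matrix.vecTail] at this
        linarith
      have h10 : A 1 0 = -A 0 1 := by
        have := congrFun (congrFun hA 0) 1
        simp [Matrix.vecHead, Matrix.vecTail] at this
        linarith
      have h33 : A 3 3 = -A 2 2 := by
        have := congrFun (congrFun hA 2) 2
        simp [Matrix.vecHead, Matrix.vecTail] at this
        linarith
      have h30 : A 3 0 = -A 0 2 := by
        have := congrFun (congrFun hA 0) 2
        simp [Matrix.vecHead, Matrix.vecTail] at this
        linarith
      have h20 : A 2 0 = -A 0 3 := by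
        have := congrFun (congrFun hA 0) 3
        simp [Matrix.vecHead, Matrix.vecTail] at this
        linarith
      have h31 : A 3 1 = -A 1 2 := by
        have := congrFun (congrFun hA 1) 2
        simp [Matrix.vecHead, Matrix.vecTail] at this
        linarith
      have h21 : A 2 1 = -A 1 3 := by
        have := congrFun (congrFun hA 1) 3
        simp [Matrix.vecHead, Matrix.vecTail] at this
        linarith
      refine ⟨((A 0 1 - l * A 2 2) / (1 - k * l)) • x0c, (hG0mem _).mpr ⟨_, rfl⟩,
        ((A 2 2 - k * A 0 1) / (1 - k * l)) • m0c + A 0 3 • m1c + A 1 3 • m2c,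
          (hMmem _).mpr ⟨_, _, _, rfl⟩,
        A 0 2 • n1c + A 1 2 • n2c, (hNmem _).mpr ⟨_, _, rfl⟩, ?_⟩
      rw [hx0c, hm0c, hm1c, hm2c, hn1c, hn2c]
      ext i j
      fin_cases i <;> fin_cases j <;>
        simp [Matrix.vecHead, Matrix.vecTail] <;>
        (try simp only [h00, h11, h23, h32, h10, h33, h30, h20, h31, h21]) <;>
        (try field_simp [hD, show (1:ℝ) - l * k ≠ 0 by rwa [mul_comm]]) <;> (try ring) <;>
        (try linarith [h00, h11, h23, h32, h10, h33, h30, h20, h31, h21])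
    · rintro ⟨a, ha, b, hb, c, hc, rfl⟩
      obtain ⟨r, rfl⟩ := (hG0mem a).mp ha
      obtain ⟨r1, s, t, rfl⟩ := (hMmem b).mp hb
      obtain ⟨p, q, rfl⟩ := (hNmem c).mp hc
      have hcombo : r • x0c + (r1 • m0c + s • m1c + t • m2c) + (p • n1c + q • n2c) =
          !![0, r + r1*l, p, s;
             -(r + r1*l), 0, q, t;
             -s, -t, r*k + r1, 0;
             -p, -q, 0, -(r*k + r1)] := by
        rw [hx0c, hm0c, hm1c, hm2c, hn1c, hn2c]
        ext i j
        fin_cases i <;> fin_cases j <;> simp [Matrix.vecHead, Matrix.vecTail] <;> ring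
      rw [eT, hTc, hcombo, aux_transpose_eta, aux_mul_fin_four, aux_mul_fin_four]
      ext i j
      fin_cases i <;> fin_cases j <;> simp [Matrix.vecHead, Matrix.vecTail] <;> ring
  · -- part 2 : independence
    intro a ha b hb c hc hsum
    obtain ⟨r, rfl⟩ := (hG0mem a).mp ha
    obtain ⟨r1, s, t, rfl⟩ := (hMmem b).mp hb
    obtain ⟨p, q, rfl⟩ := (hNmem c).mp hc
    rw [hx0c, hm0c, hm1c, hm2c, hn1c, hn2c] at hsum
    have e03 := congrFun (congrFun hsum 0) 3
    have e13 := congrFun (congrFun hsum 1) 3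
    have e02 := congrFun (congrFun hsum 0) 2
    have e12 := congrFun (congrFun hsum 1) 2
    have e01 := congrFun (congrFun hsum 0) 1
    have e22 := congrFun (congrFun hsum 2) 2
    simp [Matrix.vecHead, Matrix.vecTail] at e03 e13 e02 e12 e01 e22
    have hr1 : r1 = 0 := by
      have h0 : r1 * (1 - k * l) = 0 := by linear_combination e22 - k * e01
      rcases mul_eq_zero.mp h0 with h | h
      · exact h
      · exact absurd h hD
    have hr : r = 0 := by
      rw [hr1] at e01; simpa using e01
    refine ⟨?_, ?_, ?_⟩
    · rw [hr, zero_smul]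
    · rw [hr1, e03, e13]; simp
    · rw [e02, e12]; simp
  · -- part 3 : G0 subalgebra
    intro x hx y hy
    obtain ⟨r, rfl⟩ := (hG0mem x).mp hx
    obtain ⟨s, rfl⟩ := (hG0mem y).mp hy
    rw [smul_lie, lie_smul, lie_self, smul_zero, smul_zero]
    exact G0.zero_mem
  · -- part 4 : [G0, M] ⊆ M
    intro x hx y hy
    rw [hG0] at hx; rw [hM] at hy
    refine aux_bracket_span M _ _ ?_ x hx y hy
    intro a ha b hb
    simp only [Set.mem_singleton_iff, Set.mem_insert_iff] at ha hb
    subst ha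
    rcases hb with rfl | rfl | rfl
    · rw [hb0]; exact M.zero_mem
    · rw [hb1]; exact (hMmem _).mpr ⟨_, _, _, rfl⟩
    · rw [hb2]; exact (hMmem _).mpr ⟨_, _, _, rfl⟩
  · -- part 5 : [G0, N] ⊆ N
    intro x hx y hy
    rw [hG0] at hx; rw [hN] at hy
    refine aux_bracket_span N _ _ ?_ x hx y hy
    intro a ha b hb
    simp only [Set.mem_singleton_iff, Set.mem_insert_iff] at ha hb
    subst ha
    rcases hb with rfl | rfl
    · rw [hc1]; exact (hNmem _).mpr ⟨_, _, rfl⟩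
    · rw [hc2]; exact (hNmem _).mpr ⟨_, _, rfl⟩
  · -- part 6 : G0 ⊔ M subalgebra
    have hsup : G0 ⊔ M = Submodule.span ℝ {x0c, m0c, m1c, m2c} := by
      rw [hG0, hM, ← Submodule.span_union, Set.singleton_union]
    intro x hx y hy
    rw [hsup] at hx hy
    refine aux_bracket_span (G0 ⊔ M) _ _ ?_ x hx y hy
    intro a ha b hb
    have memM : ∀ z, (∃ r s t : ℝ, z = r • m0c + s • m1c + t • m2c) → z ∈ G0 ⊔ M :=
      fun z hz => Submodule.mem_sup_right ((hMmem z).mpr hz)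
    simp only [Set.mem_singleton_iff, Set.mem_insert_iff] at ha hb
    rcases ha with rfl | rfl | rfl | rfl <;> rcases hb with rfl | rfl | rfl | rfl
    · rw [lie_self]; exact Submodule.zero_mem _
    · rw [hb0]; exact Submodule.zero_mem _
    · rw [hb1]; exact memM _ ⟨_, _, _, rfl⟩
    · rw [hb2]; exact memM _ ⟨_, _, _, rfl⟩
    · rw [← lie_skew, hb0, neg_zero]; exact Submodule.zero_mem _
    · rw [lie_self]; exact Submodule.zero_mem _
    · rw [hb3]; exact memM _ ⟨_, _, _, rfl⟩
    · rw [hb4]; exact memM _ ⟨_, _, _, rfl⟩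
    · rw [← lie_skew, hb1]; exact neg_mem (memM _ ⟨_, _, _, rfl⟩)
    · rw [← lie_skew, hb3]; exact neg_mem (memM _ ⟨_, _, _, rfl⟩)
    · rw [lie_self]; exact Submodule.zero_mem _
    · rw [hb5]; exact Submodule.zero_mem _
    · rw [← lie_skew, hb2]; exact neg_mem (memM _ ⟨_, _, _, rfl⟩)
    · rw [← lie_skew, hb4]; exact neg_mem (memM _ ⟨_, _, _, rfl⟩)
    · rw [← lie_skew, hb5, neg_zero]; exact Submodule.zero_mem _
    · rw [lie_self]; exact Submodule.zero_mem _
  · -- part 7 : G0 ⊔ N subalgebra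
    have hsup : G0 ⊔ N = Submodule.span ℝ {x0c, n1c, n2c} := by
      rw [hG0, hN, ← Submodule.span_union, Set.singleton_union]
    intro x hx y hy
    rw [hsup] at hx hy
    refine aux_bracket_span (G0 ⊔ N) _ _ ?_ x hx y hy
    intro a ha b hb
    have memN : ∀ z, (∃ p q : ℝ, z = p • n1c + q • n2c) → z ∈ G0 ⊔ N :=
      fun z hz => Submodule.mem_sup_right ((hNmem z).mpr hz)
    simp only [Set.mem_singleton_iff, Set.mem_insert_iff] at ha hb
    rcases ha with rfl | rfl | rfl <;> rcases hb with rfl | rfl | rfl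
    · rw [lie_self]; exact Submodule.zero_mem _
    · rw [hc1]; exact memN _ ⟨_, _, rfl⟩
    · rw [hc2]; exact memN _ ⟨_, _, rfl⟩
    · rw [← lie_skew, hc1]; exact neg_mem (memN _ ⟨_, _, rfl⟩)
    · rw [lie_self]; exact Submodule.zero_mem _
    · rw [hc3]; exact Submodule.zero_mem _
    · rw [← lie_skew, hc2]; exact neg_mem (memN _ ⟨_, _, rfl⟩)
    · rw [← lie_skew, hc3, neg_zero]; exact Submodule.zero_mem _
    · rw [lie_self]; exact Submodule.zero_mem _
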